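/- Let A ∈ GL₃(C) and assume all entries of A and of A⁻¹ are nonzero and that A^Σ and M₂(A)^Σ are invertible. Then det(M₃(A)) = −(P(A)·det(A)·det(M₂(A))⁴)⁻¹ and P(M₂(A)) = −P(A⁻¹)·P(A)²·det(A)⁹·det(M₂(A))⁹. -/

import Mathlib

open Matrix

/-- `A^Σ`, with entries `(A^Σ)_{ij} = ∏_{k≠i} A_{kj}`. -/
def sigmaMat {C : Type*} [CommRing C] (A : Matrix (Fin 3) (Fin 3) C) :
    Matrix (Fin 3) (Fin 3) C :=
  Matrix.of fun i j => A (i + 1) j * A (i + 2) j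

/-- `M₂(A) := (A^Σ)⁻¹`. -/
noncomputable def M2 {C : Type*} [Field C] (A : Matrix (Fin 3) (Fin 3) C) :
    Matrix (Fin 3) (Fin 3) C :=
  (sigmaMat A)⁻¹

/-- `M₃(A) := (M₂(A)^Σ)⁻¹`. -/
noncomputable def M3 {C : Type*} [Field C] (A : Matrix (Fin 3) (Fin 3) C) :
    Matrix (Fin 3) (Fin 3) C :=
  (sigmaMat (M2 A))⁻¹

/-- `P(A)`, the product of all nine entries of `A`. -/
def Pent {C : Type*} [CommRing C] (A : Matrix (Fin 3) (Fin 3) C) : C :=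
  ∏ i : Fin 3, ∏ j : Fin 3, A i j

/-!
Writing `M₂(A) = (det A^Σ)⁻¹ • adj(A^Σ)`, both claims reduce to two polynomial identities in the
nine entries of `A`,
`det (adj(A^Σ))^Σ = -P(A) · det A · (det A^Σ)²` and `P(adj(A^Σ)) = -P(adj A) · P(A)²`,
together with the homogeneity of `Σ` (degree 2) and of `P` (degree 9) under scalars.
-/

section CommRing

variable {C : Type*} [CommRing C]

lemma sigmaMat_smul (c : C) (B : Matrix (Fin 3) (Fin 3) C) :
    sigmaMat (c • B) = c ^ 2 • sigmaMat B := by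
  ext i j
  simp only [sigmaMat, of_apply, Matrix.smul_apply, smul_eq_mul]
  ring

lemma Pent_smul (c : C) (B : Matrix (Fin 3) (Fin 3) C) :
    Pent (c • B) = c ^ 9 * Pent B := by
  simp only [Pent, Fin.prod_univ_three, Matrix.smul_apply, smul_eq_mul]
  ring

lemma det_sigmaMat_adjugate_sigmaMat (A : Matrix (Fin 3) (Fin 3) C) :
    (sigmaMat (adjugate (sigmaMat A))).det = -(Pent A * A.det * (sigmaMat A).det ^ 2) := by
  simp only [sigmaMat, Pent, det_fin_three, adjugate_fin_three, Fin.prod_univ_three, of_apply,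
    Fin.isValue, Fin.reduceAdd, zero_add, cons_val', cons_val_fin_one, cons_val_zero, cons_val_one,
    cons_val]
  ring

lemma Pent_adjugate_sigmaMat (A : Matrix (Fin 3) (Fin 3) C) :
    Pent (adjugate (sigmaMat A)) = -(Pent (adjugate A) * Pent A ^ 2) := by
  simp only [sigmaMat, Pent, adjugate_fin_three, Fin.prod_univ_three, of_apply, Fin.isValue,
    Fin.reduceAdd, zero_add, cons_val', cons_val_fin_one, cons_val_zero, cons_val_one, cons_val]
  ring

end CommRing

section Field

variable {C : Type*} [Field C] (A : Matrix (Fin 3) (Fin 3) C)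

lemma M2_eq_smul_adjugate : M2 A = (sigmaMat A).det⁻¹ • adjugate (sigmaMat A) := by
  rw [M2, inv_def, Ring.inverse_eq_inv']

lemma det_M2 : (M2 A).det = (sigmaMat A).det⁻¹ := by
  rw [M2, det_nonsing_inv, Ring.inverse_eq_inv']

lemma det_M3 : (M3 A).det = (sigmaMat (M2 A)).det⁻¹ := by
  rw [M3, det_nonsing_inv, Ring.inverse_eq_inv']

lemma det_sigmaMat_M2 (hs : (sigmaMat A).det ≠ 0) :
    (sigmaMat (M2 A)).det = -(Pent A * A.det * (M2 A).det ^ 4) := by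
  rw [det_M2, M2_eq_smul_adjugate, sigmaMat_smul, det_smul, det_sigmaMat_adjugate_sigmaMat,
    Fintype.card_fin]
  field_simp

lemma Pent_M2 : Pent (M2 A) = -(Pent (adjugate A) * Pent A ^ 2 * (M2 A).det ^ 9) := by
  rw [det_M2, M2_eq_smul_adjugate, Pent_smul, Pent_adjugate_sigmaMat]
  ring

lemma Pent_inv : Pent A⁻¹ = A.det⁻¹ ^ 9 * Pent (adjugate A) := by
  rw [inv_def, Ring.inverse_eq_inv', Pent_smul]

end Field

theorem stmt_14 (C : Type*) [Field C] (A : Matrix (Fin 3) (Fin 3) C)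
    (hA : IsUnit A.det)
    (hs : IsUnit (sigmaMat A).det) :
    (M3 A).det = -(Pent A * A.det * (M2 A).det ^ 4)⁻¹ ∧
      Pent (M2 A) = -(Pent A⁻¹ * Pent A ^ 2 * A.det ^ 9 * (M2 A).det ^ 9) := by
  refine ⟨?_, ?_⟩
  · rw [det_M3, det_sigmaMat_M2 A hs.ne_zero, inv_neg]
  · rw [Pent_M2, Pent_inv]
    field_simp [hA.ne_zero]
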